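/- arXiv:2002.02561 — 2 statements merged into one kernel-verified Lean document; each statement's English description precedes it below -/
import Mathlib

section
/- Fix an integer M ≥ 1, real numbers λ_1, …, λ_M > 0, and λ > 0. Let U ⊆ [0,∞) × [0,∞) be (relatively) open and let t : U → (0,∞) be differentiable and satisfy t(p,v) = Σ_{ρ=1}^M (1/λ_ρ + v + p/(λ + t(p,v)))⁻¹ on U, and set g_ρ(p,v) = (1/λ_ρ + v + p/(λ + t(p,v)))⁻¹ and γ(p,v) = Σ_ρ g_ρ(p,v)². Then for each ρ and every (p,v) ∈ U, − ∂g_ρ/∂v (p,v) = g_ρ(p,v)² · (1 − p γ(p,v)/(λ + t(p,v))²)⁻¹. Consequently, evaluating at v = 0, the mode error E_ρ = (w̄_ρ²/λ_ρ)·(−∂g_ρ/∂v)|_{v=0} equals (w̄_ρ²/λ_ρ) (1/λ_ρ + p/(λ + t(p,0)))⁻² (1 − p γ(p,0)/(λ + t(p,0))²)⁻¹, which is Proposition 3 of the paper. -/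
/-!
Every `g_ρ⁻¹ = 1/λ_ρ + v + p/(λ+t)` has the same derivative `Dψ`, so differentiating
`t = Σ_ρ g_ρ` gives `Dt = -γ • Dψ` (the derivative is unique on the quadrant). Feeding this
into `∂_v ψ = 1 - p/(λ+t)² · ∂_v t` yields `∂_v ψ · (1 - pγ/(λ+t)²) = 1`, which by itself
forces the factor to be nonzero; finally `-∂_v g_ρ = g_ρ² ∂_v ψ`.
-/

open Set

section

variable {E : Type*} [NormedAddCommGroup E] [NormedSpace ℝ E] {U : Set E} {x : E}

theorem HasFDerivWithinAt.inv {f : E → ℝ} {f' : E →L[ℝ] ℝ} (hf : HasFDerivWithinAt f f' U x)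
    (hx : f x ≠ 0) : HasFDerivWithinAt (fun y => (f y)⁻¹) (-(f x ^ 2)⁻¹ • f') U x :=
  (hasDerivAt_inv hx).comp_hasFDerivWithinAt x hf

theorem HasFDerivWithinAt.eq_neg_sum_inv_sq_smul_of_eqOn_sum_inv {ι : Type*} {s : Finset ι}
    {t : E → ℝ} {ψ : ι → E → ℝ} {Dt Dψ : E →L[ℝ] ℝ} (ht : HasFDerivWithinAt t Dt U x)
    (hψ : ∀ i ∈ s, HasFDerivWithinAt (ψ i) Dψ U x) (hne : ∀ i ∈ s, ψ i x ≠ 0)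
    (hU : UniqueDiffWithinAt ℝ U x) (hx : x ∈ U)
    (heq : EqOn t (fun y => ∑ i ∈ s, (ψ i y)⁻¹) U) :
    Dt = -(∑ i ∈ s, (ψ i x)⁻¹ ^ 2) • Dψ := by
  have hsum := (HasFDerivWithinAt.fun_sum fun i hi => (hψ i hi).inv (hne i hi)).congr' heq hx
  rw [hU.eq ht hsum, ← Finset.sum_smul, ← Finset.sum_neg_distrib]
  simp only [inv_pow]

end

theorem hasFDerivWithinAt_const_add_snd_add_fst_div {t : ℝ × ℝ → ℝ} {Dt : ℝ × ℝ →L[ℝ] ℝ}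
    {U : Set (ℝ × ℝ)} {q : ℝ × ℝ} (a l : ℝ) (ht : HasFDerivWithinAt t Dt U q)
    (hL : l + t q ≠ 0) :
    HasFDerivWithinAt (fun y : ℝ × ℝ => a + y.2 + y.1 / (l + t y))
      (ContinuousLinearMap.snd ℝ ℝ ℝ + (l + t q)⁻¹ • ContinuousLinearMap.fst ℝ ℝ ℝ -
        (q.1 / (l + t q) ^ 2) • Dt) U q := by
  refine HasFDerivWithinAt.congr_fderiv ((hasFDerivWithinAt_snd.const_add a).add
    (hasFDerivWithinAt_fst.mul ((ht.const_add l).inv hL))) ?_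
  refine ContinuousLinearMap.ext fun v => ?_
  simp only [add_apply, sub_apply, smul_apply, ContinuousLinearMap.coe_fst',
    ContinuousLinearMap.coe_snd', smul_eq_mul]
  ring

theorem mode_error_formula_general (M : ℕ)
    (lam : Fin M → ℝ) (hlam : ∀ ρ, 0 < lam ρ) (l : ℝ) (hl : 0 < l)
    (U : Set (ℝ × ℝ))
    (hU : ∃ V : Set (ℝ × ℝ), IsOpen V ∧ U = V ∩ (Set.Ici 0 ×ˢ Set.Ici 0))
    (t : ℝ × ℝ → ℝ) (htpos : ∀ q ∈ U, 0 < t q)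
    (heq : ∀ q ∈ U, t q = ∑ ρ, (1 / lam ρ + q.2 + q.1 / (l + t q))⁻¹)
    (Dt : ℝ × ℝ → (ℝ × ℝ) →L[ℝ] ℝ)
    (hder : ∀ q ∈ U, HasFDerivWithinAt t (Dt q) U q) :
    ∀ q ∈ U, ∀ ρ : Fin M, ∃ Dg : (ℝ × ℝ) →L[ℝ] ℝ,
      HasFDerivWithinAt (fun q' => (1 / lam ρ + q'.2 + q'.1 / (l + t q'))⁻¹) Dg U q ∧
      -(Dg (0, 1)) =
        ((1 / lam ρ + q.2 + q.1 / (l + t q))⁻¹) ^ 2 *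
          (1 - q.1 * (∑ γ, ((1 / lam γ + q.2 + q.1 / (l + t q))⁻¹) ^ 2) / (l + t q) ^ 2)⁻¹ ∧
      (q.2 = 0 → ∀ wb : ℝ,
        (wb ^ 2 / lam ρ) * (-(Dg (0, 1))) =
          (wb ^ 2 / lam ρ) * ((1 / lam ρ + q.1 / (l + t q))⁻¹) ^ 2 *
            (1 - q.1 * (∑ γ, ((1 / lam γ + q.1 / (l + t q))⁻¹) ^ 2) / (l + t q) ^ 2)⁻¹) := by
  intro q hq ρ
  obtain ⟨V, hV, rfl⟩ := hU
  obtain ⟨hp, hv⟩ : 0 ≤ q.1 ∧ 0 ≤ q.2 := hq.2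
  have hL : 0 < l + t q := by linarith [htpos q hq]
  have hψ_pos : ∀ σ, 0 < 1 / lam σ + q.2 + q.1 / (l + t q) := fun σ => by
    have := hlam σ; positivity
  have hψ σ := hasFDerivWithinAt_const_add_snd_add_fst_div (1 / lam σ) l (hder q hq) hL.ne'
  set Dψ := ContinuousLinearMap.snd ℝ ℝ ℝ + (l + t q)⁻¹ • ContinuousLinearMap.fst ℝ ℝ ℝ -
    (q.1 / (l + t q) ^ 2) • Dt q
  set γ := ∑ σ, (1 / lam σ + q.2 + q.1 / (l + t q))⁻¹ ^ 2
  have hUdiff : UniqueDiffOn ℝ (V ∩ (Ici 0 ×ˢ Ici 0)) := by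
    rw [inter_comm]; exact ((uniqueDiffOn_Ici 0).prod (uniqueDiffOn_Ici 0)).inter hV
  have hDt : Dt q = -γ • Dψ := (hder q hq).eq_neg_sum_inv_sq_smul_of_eqOn_sum_inv
    (fun σ _ => hψ σ) (fun σ _ => (hψ_pos σ).ne') (hUdiff q hq) hq heq
  have hDψ : Dψ (0, 1) = (1 - q.1 * γ / (l + t q) ^ 2)⁻¹ := by
    have h : Dψ (0, 1) = 1 - q.1 / (l + t q) ^ 2 * Dt q (0, 1) := by simp [Dψ]
    rw [hDt, smul_apply, smul_eq_mul] at h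
    refine eq_inv_of_mul_eq_one_left ?_
    linear_combination h
  have hDg : -((-((1 / lam ρ + q.2 + q.1 / (l + t q)) ^ 2)⁻¹ • Dψ) (0, 1)) =
      (1 / lam ρ + q.2 + q.1 / (l + t q))⁻¹ ^ 2 * (1 - q.1 * γ / (l + t q) ^ 2)⁻¹ := by
    rw [smul_apply, hDψ, smul_eq_mul, inv_pow, neg_mul, neg_neg]
  refine ⟨_, (hψ ρ).inv (hψ_pos ρ).ne', hDg, fun h0 wb => ?_⟩
  rw [hDg]
  simp only [γ, h0, add_zero]
  ring

/-- Proposition 3 of the paper: if `t(p,v) > 0` is differentiable on a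
relatively open subset `U` of `[0,∞) × [0,∞)` and satisfies the implicit equation
`t = Σ_ρ (1/λ_ρ + v + p/(λ+t))⁻¹` on `U`, then with `g_ρ = (1/λ_ρ + v + p/(λ+t))⁻¹`
and `γ = Σ_ρ g_ρ²`, each `g_ρ` is differentiable and
`−∂g_ρ/∂v = g_ρ² (1 − pγ/(λ+t)²)⁻¹`; consequently, at `v = 0`, the mode error
`E_ρ = (w̄_ρ²/λ_ρ)(−∂g_ρ/∂v)` equals
`(w̄_ρ²/λ_ρ)(1/λ_ρ + p/(λ+t))⁻²(1 − pγ/(λ+t)²)⁻¹`. -/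
theorem mode_error_formula (M : ℕ) (hM : 0 < M)
    (lam : Fin M → ℝ) (hlam : ∀ ρ, 0 < lam ρ) (l : ℝ) (hl : 0 < l)
    (U : Set (ℝ × ℝ))
    (hU : ∃ V : Set (ℝ × ℝ), IsOpen V ∧ U = V ∩ (Set.Ici 0 ×ˢ Set.Ici 0))
    (t : ℝ × ℝ → ℝ) (htpos : ∀ q ∈ U, 0 < t q)
    (heq : ∀ q ∈ U, t q = ∑ ρ, (1 / lam ρ + q.2 + q.1 / (l + t q))⁻¹)
    (Dt : ℝ × ℝ → (ℝ × ℝ) →L[ℝ] ℝ)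
    (hder : ∀ q ∈ U, HasFDerivWithinAt t (Dt q) U q) :
    ∀ q ∈ U, ∀ ρ : Fin M, ∃ Dg : (ℝ × ℝ) →L[ℝ] ℝ,
      HasFDerivWithinAt (fun q' => (1 / lam ρ + q'.2 + q'.1 / (l + t q'))⁻¹) Dg U q ∧
      -(Dg (0, 1)) =
        ((1 / lam ρ + q.2 + q.1 / (l + t q))⁻¹) ^ 2 *
          (1 - q.1 * (∑ γ, ((1 / lam γ + q.2 + q.1 / (l + t q))⁻¹) ^ 2) / (l + t q) ^ 2)⁻¹ ∧
      (q.2 = 0 → ∀ wb : ℝ,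
        (wb ^ 2 / lam ρ) * (-(Dg (0, 1))) =
          (wb ^ 2 / lam ρ) * ((1 / lam ρ + q.1 / (l + t q))⁻¹) ^ 2 *
            (1 - q.1 * (∑ γ, ((1 / lam γ + q.1 / (l + t q))⁻¹) ^ 2) / (l + t q) ^ 2)⁻¹) :=
  mode_error_formula_general M lam hlam l hl U hU t htpos heq Dt hder
end

section
/- Fix an integer M ≥ 1, real numbers λ_1, …, λ_M > 0, and λ > 0, and for each p ≥ 0 let t(p) > 0 be the unique solution of the implicit equation t = Σ_{ρ=1}^M (1/λ_ρ + p/(λ + t))⁻¹. Then, as p → ∞, t(p) → 0, for each ρ the scaled diagonal resolvent entry satisfies p · g_ρ(p) → λ, and consequently p · t(p) → M λ. -/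
/-!
Each summand `(1/λ_ρ + p/(λ + t))⁻¹` is at most `λ_ρ`, so `t(p) ≤ Σ λ_ρ` stays bounded; it is
also at most `(λ + t)/p`, so `t(p) = O(1/p)` tends to `0`. Then
`p · g_ρ(p) = ((p λ_ρ)⁻¹ + (λ + t(p))⁻¹)⁻¹ → (0 + λ⁻¹)⁻¹ = λ`, and summing over `ρ` gives
`p · t(p) → M λ`.
-/

open Filter Topology

section Resolvent

variable {a x p s : ℝ}

lemma inv_one_div_add_le (ha : 0 < a) (hx : 0 ≤ x) : (1 / a + x)⁻¹ ≤ a := by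
  simpa using inv_anti₀ (by positivity) (le_add_of_nonneg_right hx : 1 / a ≤ 1 / a + x)

lemma inv_one_div_add_div_le (ha : 0 ≤ a) (hp : 0 < p) (hs : 0 < s) :
    (1 / a + p / s)⁻¹ ≤ s / p := by
  calc (1 / a + p / s)⁻¹ ≤ (p / s)⁻¹ :=
        inv_anti₀ (by positivity) (le_add_of_nonneg_left (by positivity))
    _ = s / p := inv_div p s

lemma mul_inv_one_div_add_div (hp : p ≠ 0) :
    p * (1 / a + p / s)⁻¹ = ((p * a)⁻¹ + s⁻¹)⁻¹ := by
  rw [← inv_inv p, ← mul_inv, inv_inv, mul_add, mul_inv, one_div, div_eq_mul_inv p s,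
    ← mul_assoc, inv_mul_cancel₀ hp, one_mul]

lemma tendsto_mul_inv_one_div_add_div (a : ℝ) {s : ℝ → ℝ} {l : ℝ} (hl : l ≠ 0)
    (hs : Tendsto s atTop (𝓝 l)) :
    Tendsto (fun p => p * (1 / a + p / s p)⁻¹) atTop (𝓝 l) := by
  have hpa : Tendsto (fun p : ℝ => (p * a)⁻¹) atTop (𝓝 0) := by
    simpa only [mul_inv, zero_mul] using tendsto_inv_atTop_zero.mul_const a⁻¹
  have hsum := (hpa.add (hs.inv₀ hl)).inv₀ (by simpa using inv_ne_zero hl)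
  rw [zero_add, inv_inv] at hsum
  refine hsum.congr' ?_
  filter_upwards [eventually_ne_atTop 0] with p hp
  exact (mul_inv_one_div_add_div hp).symm

end Resolvent

section LearningCurve

variable {ι : Type*} [Fintype ι] {lam : ι → ℝ} {l : ℝ} {t : ℝ → ℝ}

lemma tendsto_zero_of_learning_curve (hlam : ∀ ρ, 0 < lam ρ) (hl : 0 < l)
    (htpos : ∀ p ≥ (0 : ℝ), 0 < t p)
    (heq : ∀ p ≥ (0 : ℝ), t p = ∑ ρ, (1 / lam ρ + p / (l + t p))⁻¹) :
    Tendsto t atTop (𝓝 0) := by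
  set C := ∑ ρ, lam ρ
  have hbounded : ∀ p ≥ (0 : ℝ), t p ≤ C := fun p hp => by
    rw [heq p hp]
    exact Finset.sum_le_sum fun ρ _ =>
      inv_one_div_add_le (hlam ρ) (div_nonneg hp (add_pos hl (htpos p hp)).le)
  have hdecay : ∀ p > (0 : ℝ), t p ≤ Fintype.card ι * ((l + C) / p) := fun p hp => by
    calc t p = ∑ ρ, (1 / lam ρ + p / (l + t p))⁻¹ := heq p hp.le
      _ ≤ ∑ _ρ : ι, (l + C) / p := Finset.sum_le_sum fun ρ _ =>
          (inv_one_div_add_div_le (hlam ρ).le hp (add_pos hl (htpos p hp.le))).trans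
            (by gcongr; exact hbounded p hp.le)
      _ = Fintype.card ι * ((l + C) / p) := by simp
  have hupper : Tendsto (fun p : ℝ => Fintype.card ι * ((l + C) / p)) atTop (𝓝 0) := by
    simpa using (tendsto_const_nhds.div_atTop tendsto_id).const_mul (Fintype.card ι : ℝ)
  refine tendsto_of_tendsto_of_tendsto_of_le_of_le' tendsto_const_nhds hupper ?_ ?_
  · filter_upwards [eventually_ge_atTop 0] with p hp using (htpos p hp).le
  · filter_upwards [eventually_gt_atTop 0] with p hp using hdecay p hp

end LearningCurve

theorem resolvent_asymptotics_general (M : ℕ)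
    (lam : Fin M → ℝ) (hlam : ∀ ρ, 0 < lam ρ) (l : ℝ) (hl : 0 < l)
    (t : ℝ → ℝ) (htpos : ∀ p ≥ (0 : ℝ), 0 < t p)
    (heq : ∀ p ≥ (0 : ℝ), t p = ∑ ρ, (1 / lam ρ + p / (l + t p))⁻¹) :
    Tendsto t atTop (nhds 0) ∧
    (∀ ρ : Fin M,
      Tendsto (fun p => p * (1 / lam ρ + p / (l + t p))⁻¹) atTop (nhds l)) ∧
    Tendsto (fun p => p * t p) atTop (nhds ((M : ℝ) * l)) := by
  have ht : Tendsto t atTop (𝓝 0) := tendsto_zero_of_learning_curve hlam hl htpos heq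
  have hmode : ∀ ρ : Fin M,
      Tendsto (fun p => p * (1 / lam ρ + p / (l + t p))⁻¹) atTop (𝓝 l) := fun ρ =>
    tendsto_mul_inv_one_div_add_div (lam ρ) hl.ne' (by simpa using ht.const_add l)
  refine ⟨ht, hmode, ?_⟩
  have hsum := tendsto_finsetSum Finset.univ fun ρ _ => hmode ρ
  rw [Finset.sum_const, Finset.card_univ, Fintype.card_fin, nsmul_eq_mul] at hsum
  refine hsum.congr' ?_
  filter_upwards [eventually_ge_atTop 0] with p hp
  rw [← Finset.mul_sum, ← heq p hp]

/-- along the positive solution `t(p)` of the implicit learning-curve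
equation, as `p → ∞`: `t(p) → 0`, the scaled diagonal resolvent entries satisfy
`p · g_ρ(p) → λ` with `g_ρ(p) = (1/λ_ρ + p/(λ + t(p)))⁻¹`, and `p · t(p) → Mλ`. -/
theorem resolvent_asymptotics (M : ℕ) (hM : 0 < M)
    (lam : Fin M → ℝ) (hlam : ∀ ρ, 0 < lam ρ) (l : ℝ) (hl : 0 < l)
    (t : ℝ → ℝ) (htpos : ∀ p ≥ (0 : ℝ), 0 < t p)
    (heq : ∀ p ≥ (0 : ℝ), t p = ∑ ρ, (1 / lam ρ + p / (l + t p))⁻¹) :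
    Tendsto t atTop (nhds 0) ∧
    (∀ ρ : Fin M,
      Tendsto (fun p => p * (1 / lam ρ + p / (l + t p))⁻¹) atTop (nhds l)) ∧
    Tendsto (fun p => p * t p) atTop (nhds ((M : ℝ) * l)) :=
  resolvent_asymptotics_general M lam hlam l hl t htpos heq
end
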